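/- (Theorem 2, prediction-step MSE bound under an unknown DGP.) Let (Ω, 𝔽, ℙ) be a probability space, P ∈ ℝ^{k×k} symmetric positive definite, Φ ∈ ℝ^{k×k}, ω ∈ ℝ^k and ε > 0. Let u, w, r : Ω → ℝ^k be square-integrable random vectors with 𝔼[‖w‖²] ≤ s_ω² and 𝔼[‖r‖²] ≤ q². Then 𝔼[‖Φu + (Φ − I)w + r‖²_P] ≤ (1 + ε²)·‖Φ‖²_P·𝔼[‖u‖²_P] + (1 + 1/ε²)·λ_max(P)·(‖I − Φ‖₂·s_ω + q)², where ‖·‖₂ is the spectral norm. Equivalently, with u = θ_upd − θ*, w = θ* − ω and r = θ* − θ*₊ (so that the prediction error is (I−Φ)ω + Φθ_upd − θ*₊ = Φu + (Φ−I)w + r), the P-weighted mean squared prediction error is bounded by the stated quantity. -/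

import Mathlib

/-! Split the prediction error as `Φu + ((Φ - I)w + r)` and apply Young's inequality
`‖a + b‖²_P ≤ (1 + ε²)‖a‖²_P + (1 + 1/ε²)‖b‖²_P` for the `P`-form. The first term is controlled
by the induced norm, `‖Φu‖_P ≤ ‖Φ‖_P ‖u‖_P`; the second by `‖b‖²_P ≤ λ_max(P)‖b‖²` and a second
Young split of `‖(Φ - I)w + r‖²` with a free weight `δ`. After taking expectations, optimising
over `δ` turns `(1 + δ)‖I - Φ‖₂² s_ω² + (1 + 1/δ) q²` into `(‖I - Φ‖₂ s_ω + q)²`. -/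

open Matrix

/-- Smallest eigenvalue of a (Hermitian) real matrix; junk value 0 otherwise. -/
noncomputable def lMin {k : ℕ} (A : Matrix (Fin k) (Fin k) ℝ) : ℝ :=
  letI := Classical.propDecidable A.IsHermitian
  if h : A.IsHermitian then ⨅ i, h.eigenvalues i else 0

/-- Largest eigenvalue of a (Hermitian) real matrix; junk value 0 otherwise. -/
noncomputable def lMax {k : ℕ} (A : Matrix (Fin k) (Fin k) ℝ) : ℝ :=
  letI := Classical.propDecidable A.IsHermitian
  if h : A.IsHermitian then ⨆ i, h.eigenvalues i else 0

/-- P-weighted squared vector norm `‖x‖_P² = xᵀ P x`. -/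
def wq {k : ℕ} (P : Matrix (Fin k) (Fin k) ℝ) (x : Fin k → ℝ) : ℝ := x ⬝ᵥ P *ᵥ x

/-- Induced P-weighted matrix norm `‖A‖_P = sup_{x ≠ 0} ‖Ax‖_P / ‖x‖_P`. -/
noncomputable def wMatNorm {k : ℕ} (P A : Matrix (Fin k) (Fin k) ℝ) : ℝ :=
  sSup {r : ℝ | ∃ x : Fin k → ℝ, x ≠ 0 ∧ r = Real.sqrt (wq P (A *ᵥ x)) / Real.sqrt (wq P x)}


/-- Euclidean (spectral) operator norm `‖A‖₂ = sup_{x ≠ 0} ‖Ax‖/‖x‖` (Euclidean vector norms). -/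
noncomputable def spec2Norm {k : ℕ} (A : Matrix (Fin k) (Fin k) ℝ) : ℝ :=
  sSup {r : ℝ | ∃ x : Fin k → ℝ, x ≠ 0 ∧
    r = Real.sqrt (A *ᵥ x ⬝ᵥ A *ᵥ x) / Real.sqrt (x ⬝ᵥ x)}

open MeasureTheory

lemma Matrix.IsHermitian.exists_dotProduct_mulVec_eq_sum_eigenvalues {n : Type*} [Fintype n]
    [DecidableEq n] {A : Matrix n n ℝ} (hA : A.IsHermitian) (x : n → ℝ) :
    ∃ y : n → ℝ, y ⬝ᵥ y = x ⬝ᵥ x ∧ x ⬝ᵥ A *ᵥ x = ∑ i, hA.eigenvalues i * y i ^ 2 := by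
  set U : Matrix n n ℝ := (hA.eigenvectorUnitary : Matrix n n ℝ)
  have hUt : star U = Uᵀ := star_eq_conjTranspose U ▸ conjTranspose_eq_transpose_of_trivial U
  have hU : U * Uᵀ = 1 := hUt ▸ Unitary.coe_mul_star_self hA.eigenvectorUnitary
  have hx : x ᵥ* U = Uᵀ *ᵥ x := (mulVec_transpose U x).symm
  refine ⟨Uᵀ *ᵥ x, ?_, ?_⟩
  · rw [← hx, ← dotProduct_mulVec, hx, mulVec_mulVec, hU, one_mulVec]
  · conv_lhs => rw [hA.spectral_theorem, Unitary.conjStarAlgAut_apply]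
    rw [hUt, ← mulVec_mulVec, ← mulVec_mulVec, dotProduct_mulVec, hx]
    simp only [dotProduct, mulVec_diagonal, Function.comp_apply, RCLike.ofReal_real_eq_id, id]
    exact Finset.sum_congr rfl fun i _ => by ring

section Eigenvalues

variable {k : ℕ} {A : Matrix (Fin k) (Fin k) ℝ}

lemma dotProduct_mulVec_le_lMax_mul (hA : A.IsHermitian) (x : Fin k → ℝ) :
    x ⬝ᵥ A *ᵥ x ≤ lMax A * (x ⬝ᵥ x) := by
  obtain ⟨y, hyy, hxy⟩ := hA.exists_dotProduct_mulVec_eq_sum_eigenvalues x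
  have hbdd : BddAbove (Set.range hA.eigenvalues) := (Set.finite_range _).bddAbove
  rw [hxy, ← hyy, lMax, dif_pos hA, dotProduct, Finset.mul_sum]
  exact Finset.sum_le_sum fun i _ => by
    rw [← sq]; exact mul_le_mul_of_nonneg_right (le_ciSup hbdd i) (sq_nonneg _)

lemma lMin_mul_le_dotProduct_mulVec (hA : A.IsHermitian) (x : Fin k → ℝ) :
    lMin A * (x ⬝ᵥ x) ≤ x ⬝ᵥ A *ᵥ x := by
  obtain ⟨y, hyy, hxy⟩ := hA.exists_dotProduct_mulVec_eq_sum_eigenvalues x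
  have hbdd : BddBelow (Set.range hA.eigenvalues) := (Set.finite_range _).bddBelow
  rw [hxy, ← hyy, lMin, dif_pos hA, dotProduct, Finset.mul_sum]
  exact Finset.sum_le_sum fun i _ => by
    rw [← sq]; exact mul_le_mul_of_nonneg_right (ciInf_le hbdd i) (sq_nonneg _)

lemma lMax_nonneg (hA : A.PosSemidef) : 0 ≤ lMax A := by
  rw [lMax, dif_pos hA.isHermitian]
  exact Real.iSup_nonneg hA.eigenvalues_nonneg

lemma lMin_pos [Nonempty (Fin k)] (hA : A.PosDef) : 0 < lMin A := by
  rw [lMin, dif_pos hA.isHermitian]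
  obtain ⟨i, hi⟩ := exists_eq_ciInf_of_finite (f := hA.isHermitian.eigenvalues)
  exact hi ▸ hA.eigenvalues_pos i

end Eigenvalues

section WeightedNorm

variable {k : ℕ} {P : Matrix (Fin k) (Fin k) ℝ}

lemma wq_nonneg (hP : P.PosSemidef) (x : Fin k → ℝ) : 0 ≤ wq P x := by
  simpa [wq] using hP.dotProduct_mulVec_nonneg x

lemma wq_pos (hP : P.PosDef) {x : Fin k → ℝ} (hx : x ≠ 0) : 0 < wq P x := by
  simpa [wq] using hP.dotProduct_mulVec_pos hx

@[simp]
lemma wq_zero (P : Matrix (Fin k) (Fin k) ℝ) : wq P 0 = 0 := by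
  simp [wq]

@[simp]
lemma wq_one (x : Fin k → ℝ) : wq 1 x = x ⬝ᵥ x := by
  rw [wq, one_mulVec]

lemma wq_add_le (hP : P.PosSemidef) {t : ℝ} (ht : 0 < t) (a b : Fin k → ℝ) :
    wq P (a + b) ≤ (1 + t) * wq P a + (1 + 1 / t) * wq P b := by
  set c := a ⬝ᵥ P *ᵥ b + b ⬝ᵥ P *ᵥ a
  have hsum : wq P (a + b) = wq P a + c + wq P b := by
    simp only [wq, c, mulVec_add, add_dotProduct, dotProduct_add]; ring
  have hdiff : wq P (t • a - b) = t ^ 2 * wq P a - t * c + wq P b := by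
    simp only [wq, c, mulVec_sub, mulVec_smul, sub_dotProduct, dotProduct_sub, smul_dotProduct,
      dotProduct_smul, smul_eq_mul]; ring
  have hc : t * c ≤ t * (t * wq P a) + wq P b := by nlinarith [wq_nonneg hP (t • a - b)]
  have hc' : c ≤ t * wq P a + 1 / t * wq P b := by
    rw [show t * wq P a + 1 / t * wq P b = (t * (t * wq P a) + wq P b) / t by field_simp,
      le_div_iff₀ ht]
    linarith
  rw [hsum]; linarith

end WeightedNorm

lemma le_sq_sSup_ratio_mul {α : Type*} [Zero α] {f g : α → ℝ} (C : ℝ)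
    (hfg : ∀ x ≠ 0, f x ≤ C * g x) (hg : ∀ x ≠ 0, 0 < g x) (hf0 : f 0 = 0) (hg0 : g 0 = 0)
    (x : α) : f x ≤ sSup {r : ℝ | ∃ x, x ≠ 0 ∧ r = √(f x) / √(g x)} ^ 2 * g x := by
  rcases eq_or_ne x 0 with rfl | hx
  · simp [hf0, hg0]
  have hbdd : BddAbove {r : ℝ | ∃ x, x ≠ 0 ∧ r = √(f x) / √(g x)} := by
    refine ⟨√C, ?_⟩
    rintro _ ⟨y, hy, rfl⟩
    rw [div_le_iff₀ (Real.sqrt_pos.2 (hg y hy)), ← Real.sqrt_mul' _ (hg y hy).le]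
    exact Real.sqrt_le_sqrt (hfg y hy)
  have hle := le_csSup hbdd ⟨x, hx, rfl⟩
  rw [div_le_iff₀ (Real.sqrt_pos.2 (hg x hx)), Real.sqrt_le_iff, mul_pow,
    Real.sq_sqrt (hg x hx).le] at hle
  exact hle.2

lemma exists_wq_mulVec_le {k : ℕ} {P : Matrix (Fin k) (Fin k) ℝ} (hP : P.PosDef)
    (A : Matrix (Fin k) (Fin k) ℝ) : ∃ C, ∀ x ≠ 0, wq P (A *ᵥ x) ≤ C * wq P x := by
  refine ⟨lMax P * lMax (Aᴴ * A) / lMin P, fun x hx => ?_⟩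
  have : Nonempty (Fin k) := ⟨(Function.ne_iff.mp hx).choose⟩
  have hAA : A *ᵥ x ⬝ᵥ A *ᵥ x = x ⬝ᵥ (Aᴴ * A) *ᵥ x := by
    rw [← mulVec_mulVec, conjTranspose_eq_transpose_of_trivial, dotProduct_mulVec x Aᵀ,
      vecMul_transpose]
  calc wq P (A *ᵥ x) ≤ lMax P * (A *ᵥ x ⬝ᵥ A *ᵥ x) :=
        dotProduct_mulVec_le_lMax_mul hP.isHermitian _
    _ ≤ lMax P * (lMax (Aᴴ * A) * (x ⬝ᵥ x)) := by
        rw [hAA]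
        gcongr
        · exact lMax_nonneg hP.posSemidef
        · exact dotProduct_mulVec_le_lMax_mul (isHermitian_conjTranspose_mul_self A) x
    _ = lMax P * lMax (Aᴴ * A) / lMin P * (lMin P * (x ⬝ᵥ x)) := by
        field_simp [(lMin_pos hP).ne']
    _ ≤ lMax P * lMax (Aᴴ * A) / lMin P * wq P x := by
        refine mul_le_mul_of_nonneg_left (lMin_mul_le_dotProduct_mulVec hP.isHermitian x) ?_
        exact div_nonneg (mul_nonneg (lMax_nonneg hP.posSemidef)
          (lMax_nonneg (posSemidef_conjTranspose_mul_self A))) (lMin_pos hP).le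

lemma wq_mulVec_le_wMatNorm_sq_mul {k : ℕ} {P : Matrix (Fin k) (Fin k) ℝ} (hP : P.PosDef)
    (A : Matrix (Fin k) (Fin k) ℝ) (x : Fin k → ℝ) :
    wq P (A *ᵥ x) ≤ wMatNorm P A ^ 2 * wq P x :=
  let ⟨C, hC⟩ := exists_wq_mulVec_le hP A
  le_sq_sSup_ratio_mul C hC (fun _ => wq_pos hP) (by simp) (by simp) x

lemma spec2Norm_eq_wMatNorm_one {k : ℕ} (A : Matrix (Fin k) (Fin k) ℝ) :
    spec2Norm A = wMatNorm 1 A := by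
  simp only [spec2Norm, wMatNorm, wq_one]

lemma spec2Norm_nonneg {k : ℕ} (A : Matrix (Fin k) (Fin k) ℝ) : 0 ≤ spec2Norm A :=
  Real.sSup_nonneg fun _ ⟨_, _, h⟩ => h ▸ by positivity

lemma mulVec_dotProduct_le_spec2Norm_sq_mul {k : ℕ} (A : Matrix (Fin k) (Fin k) ℝ)
    (x : Fin k → ℝ) : A *ᵥ x ⬝ᵥ A *ᵥ x ≤ spec2Norm A ^ 2 * (x ⬝ᵥ x) := by
  simpa [spec2Norm_eq_wMatNorm_one] using wq_mulVec_le_wMatNorm_sq_mul PosDef.one A x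

-- `(b + η)/(a + η)` perturbs the optimal weight `b/a`, which degenerates when `a` or `b` is `0`.
lemma young_weight_le {a b η : ℝ} (ha : 0 ≤ a) (hb : 0 ≤ b) (hη : 0 < η) :
    (1 + (b + η) / (a + η)) * a ^ 2 + (1 + 1 / ((b + η) / (a + η))) * b ^ 2
      ≤ (a + b) ^ 2 + η * (a + b) := by
  have h1 : a ^ 2 * (b + η) ≤ a * (b + η) * (a + η) := by nlinarith [mul_nonneg ha hη.le]
  have h2 : b ^ 2 * (a + η) ≤ b * (a + η) * (b + η) := by nlinarith [mul_nonneg hb hη.le]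
  rw [one_div_div, ← sub_nonneg]
  have e : (a + b) ^ 2 + η * (a + b) - ((1 + (b + η) / (a + η)) * a ^ 2
      + (1 + (a + η) / (b + η)) * b ^ 2)
      = (a * (b + η) * (a + η) - a ^ 2 * (b + η)) / (a + η)
        + (b * (a + η) * (b + η) - b ^ 2 * (a + η)) / (b + η) := by
    field_simp; ring
  rw [e]
  exact add_nonneg (div_nonneg (by linarith) (by linarith)) (div_nonneg (by linarith) (by linarith))

lemma le_add_mul_sq_of_forall_young {a b c d L : ℝ} (ha : 0 ≤ a) (hb : 0 ≤ b) (hL : 0 ≤ L)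
    (h : ∀ δ > 0, c ≤ d + L * ((1 + δ) * a ^ 2 + (1 + 1 / δ) * b ^ 2)) :
    c ≤ d + L * (a + b) ^ 2 := by
  have hη : ∀ η > 0, c ≤ d + L * ((a + b) ^ 2 + η * (a + b)) := fun η hη =>
    (h ((b + η) / (a + η)) (div_pos (by linarith) (by linarith))).trans
      (by gcongr d + L * ?_; exact young_weight_le ha hb hη)
  have hcont : Continuous fun η => d + L * ((a + b) ^ 2 + η * (a + b)) := by fun_prop
  refine ge_of_tendsto (x := nhdsWithin 0 (Set.Ioi 0)) ?_ (eventually_nhdsWithin_of_forall hη)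
  simpa using (hcont.tendsto 0).mono_left nhdsWithin_le_nhds

lemma wq_prediction_error_le {k : ℕ} {P : Matrix (Fin k) (Fin k) ℝ} (hP : P.PosDef)
    (Φ : Matrix (Fin k) (Fin k) ℝ) {t δ : ℝ} (ht : 0 < t) (hδ : 0 < δ) (u w r : Fin k → ℝ) :
    wq P (Φ *ᵥ u + (Φ - 1) *ᵥ w + r) ≤ (1 + t) * wMatNorm P Φ ^ 2 * wq P u
      + (1 + 1 / t) * lMax P
        * ((1 + δ) * spec2Norm (1 - Φ) ^ 2 * (w ⬝ᵥ w) + (1 + 1 / δ) * (r ⬝ᵥ r)) := by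
  have hnoise : (Φ - 1) *ᵥ w ⬝ᵥ (Φ - 1) *ᵥ w ≤ spec2Norm (1 - Φ) ^ 2 * (w ⬝ᵥ w) := by
    rw [← neg_sub, neg_mulVec, neg_dotProduct_neg]
    exact mulVec_dotProduct_le_spec2Norm_sq_mul _ w
  have hsplit := wq_add_le PosSemidef.one hδ ((Φ - 1) *ᵥ w) r
  rw [wq_one, wq_one, wq_one] at hsplit
  calc wq P (Φ *ᵥ u + (Φ - 1) *ᵥ w + r)
      ≤ (1 + t) * wq P (Φ *ᵥ u) + (1 + 1 / t) * wq P ((Φ - 1) *ᵥ w + r) := by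
        rw [add_assoc]; exact wq_add_le hP.posSemidef ht _ _
    _ ≤ (1 + t) * (wMatNorm P Φ ^ 2 * wq P u)
          + (1 + 1 / t) * (lMax P * (((Φ - 1) *ᵥ w + r) ⬝ᵥ ((Φ - 1) *ᵥ w + r))) := by
        gcongr
        · exact wq_mulVec_le_wMatNorm_sq_mul hP Φ u
        · exact dotProduct_mulVec_le_lMax_mul hP.isHermitian _
    _ ≤ (1 + t) * (wMatNorm P Φ ^ 2 * wq P u) + (1 + 1 / t) * (lMax P
          * ((1 + δ) * (spec2Norm (1 - Φ) ^ 2 * (w ⬝ᵥ w)) + (1 + 1 / δ) * (r ⬝ᵥ r))) := by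
        have := lMax_nonneg hP.posSemidef
        gcongr
        exact hsplit.trans (by gcongr)
    _ = _ := by ring

theorem prediction_mse_unknown_dgp_general {k : ℕ}
    {Ω : Type*} [MeasurableSpace Ω] (μ : Measure Ω)
    (P Φ : Matrix (Fin k) (Fin k) ℝ) (hP : P.PosDef) (ε : ℝ) (hε : 0 < ε)
    (u w r : Ω → (Fin k → ℝ)) (sω q : ℝ) (hsω : 0 ≤ sω) (hq : 0 ≤ q)
    (hintu : Integrable (fun x => wq P (u x)) μ)
    (hintw : Integrable (fun x => w x ⬝ᵥ w x) μ)
    (hintr : Integrable (fun x => r x ⬝ᵥ r x) μ)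
    (hw : ∫ x, w x ⬝ᵥ w x ∂μ ≤ sω ^ 2)
    (hr : ∫ x, r x ⬝ᵥ r x ∂μ ≤ q ^ 2) :
    ∫ x, wq P (Φ *ᵥ u x + (Φ - 1) *ᵥ w x + r x) ∂μ ≤
      (1 + ε ^ 2) * wMatNorm P Φ ^ 2 * ∫ x, wq P (u x) ∂μ
        + (1 + 1 / ε ^ 2) * lMax P * (spec2Norm (1 - Φ) * sω + q) ^ 2 := by
  have hL : 0 ≤ (1 + 1 / ε ^ 2) * lMax P := mul_nonneg (by positivity) (lMax_nonneg hP.posSemidef)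
  refine le_add_mul_sq_of_forall_young (mul_nonneg (spec2Norm_nonneg _) hsω) hq hL fun δ hδ => ?_
  set S := spec2Norm (1 - Φ)
  have hintnoise : Integrable
      (fun x => (1 + δ) * S ^ 2 * (w x ⬝ᵥ w x) + (1 + 1 / δ) * (r x ⬝ᵥ r x)) μ :=
    (hintw.const_mul _).add (hintr.const_mul _)
  calc ∫ x, wq P (Φ *ᵥ u x + (Φ - 1) *ᵥ w x + r x) ∂μ
      ≤ ∫ x, ((1 + ε ^ 2) * wMatNorm P Φ ^ 2 * wq P (u x) + (1 + 1 / ε ^ 2) * lMax P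
          * ((1 + δ) * S ^ 2 * (w x ⬝ᵥ w x) + (1 + 1 / δ) * (r x ⬝ᵥ r x))) ∂μ :=
        integral_mono_of_nonneg (ae_of_all _ fun x => wq_nonneg hP.posSemidef _)
          ((hintu.const_mul _).add (hintnoise.const_mul _))
          (ae_of_all _ fun x => wq_prediction_error_le hP Φ (pow_pos hε 2) hδ _ _ _)
    _ = (1 + ε ^ 2) * wMatNorm P Φ ^ 2 * ∫ x, wq P (u x) ∂μ + (1 + 1 / ε ^ 2) * lMax P
          * ((1 + δ) * S ^ 2 * ∫ x, w x ⬝ᵥ w x ∂μ + (1 + 1 / δ) * ∫ x, r x ⬝ᵥ r x ∂μ) := by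
        rw [integral_add (hintu.const_mul _) (hintnoise.const_mul _), integral_const_mul,
          integral_const_mul, integral_add (hintw.const_mul _) (hintr.const_mul _),
          integral_const_mul, integral_const_mul]
    _ ≤ (1 + ε ^ 2) * wMatNorm P Φ ^ 2 * ∫ x, wq P (u x) ∂μ + (1 + 1 / ε ^ 2) * lMax P
          * ((1 + δ) * (S * sω) ^ 2 + (1 + 1 / δ) * q ^ 2) := by
        rw [mul_pow, ← mul_assoc]
        gcongr

/-- Theorem 2, prediction-step MSE bound under an unknown DGP.
For square-integrable random vectors `u, w, r` with `𝔼‖w‖² ≤ s_ω²` and `𝔼‖r‖² ≤ q²`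
(`s_ω, q ≥ 0`), and any `ε > 0`,
`𝔼‖Φu + (Φ − I)w + r‖²_P ≤ (1 + ε²)‖Φ‖²_P 𝔼‖u‖²_P + (1 + 1/ε²)λ_max(P)(‖I − Φ‖₂ s_ω + q)²`. -/
theorem prediction_mse_unknown_dgp {k : ℕ}
    {Ω : Type*} [MeasurableSpace Ω] (μ : Measure Ω) [IsProbabilityMeasure μ]
    (P Φ : Matrix (Fin k) (Fin k) ℝ) (hP : P.PosDef) (ε : ℝ) (hε : 0 < ε)
    (u w r : Ω → (Fin k → ℝ)) (sω q : ℝ) (hsω : 0 ≤ sω) (hq : 0 ≤ q)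
    (hintu : Integrable (fun x => wq P (u x)) μ)
    (hintw : Integrable (fun x => w x ⬝ᵥ w x) μ)
    (hintr : Integrable (fun x => r x ⬝ᵥ r x) μ)
    (hintall : Integrable (fun x => wq P (Φ *ᵥ u x + (Φ - 1) *ᵥ w x + r x)) μ)
    (hw : ∫ x, w x ⬝ᵥ w x ∂μ ≤ sω ^ 2)
    (hr : ∫ x, r x ⬝ᵥ r x ∂μ ≤ q ^ 2) :
    ∫ x, wq P (Φ *ᵥ u x + (Φ - 1) *ᵥ w x + r x) ∂μ ≤
      (1 + ε ^ 2) * wMatNorm P Φ ^ 2 * ∫ x, wq P (u x) ∂μ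
        + (1 + 1 / ε ^ 2) * lMax P * (spec2Norm (1 - Φ) * sω + q) ^ 2 :=
  prediction_mse_unknown_dgp_general μ P Φ hP ε hε u w r sω q hsω hq hintu hintw hintr hw hr
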